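/- arXiv:math/0703608 — 3 statements merged into one kernel-verified Lean document; each statement's English description precedes it below -/
import Mathlib

section
/- A tropical linear map f : Tⁿ → Tᵐ (T a tropical semifield, f given by a matrix via max-plus multiplication) is surjective if and only if for every i = 1, …, m there exists a nonzero scalar a with a ⊙ e_i among the columns of the matrix of f, where e_i is the i-th canonical basis vector of Tᵐ. -/
/-- The tropical (max-plus) linear map `Tⁿ → Tᵐ` associated with a matrix `A`,
where `T = Λ ∪ {-∞}`: `f(x)ⁱ = max_j (Aⁱ_j + xʲ)`. -/
def tropMap {Λ : Type*} [AddCommGroup Λ] [LinearOrder Λ] [IsOrderedAddMonoid Λ] {m n : ℕ}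
    (A : Fin m → Fin n → WithBot Λ) (x : Fin n → WithBot Λ) : Fin m → WithBot Λ :=
  fun i => Finset.univ.sup fun j => A i j + x j

lemma coe_add_add_neg {Λ : Type*} [AddCommGroup Λ] [LinearOrder Λ] [IsOrderedAddMonoid Λ] (c : Λ) (y : WithBot Λ) :
    (c : WithBot Λ) + (y + ↑(-c)) = y := by
  induction y using WithBot.recBotCoe with
  | bot => simp
  | coe a =>
    rw [← WithBot.coe_add, ← WithBot.coe_add, WithBot.coe_inj]
    abel

/-- A tropical linear map `f : Tⁿ → Tᵐ` is surjective if and only if for every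
`i = 1, …, m` there is a nonzero scalar `c` such that `c ⊙ e_i` is among the
columns of the matrix of `f`, where `e_i` is the `i`-th canonical basis vector. -/
theorem tropMap_surjective_iff {Λ : Type*} [AddCommGroup Λ] [LinearOrder Λ] [IsOrderedAddMonoid Λ] {m n : ℕ}
    (A : Fin m → Fin n → WithBot Λ) :
    Function.Surjective (tropMap A) ↔
      ∀ i : Fin m, ∃ (c : Λ) (j : Fin n),
        (fun k => A k j) =
          fun k => (c : WithBot Λ) + (if k = i then (0 : WithBot Λ) else ⊥) := by
  constructor
  · intro hs i
    obtain ⟨x, hx⟩ := hs (fun k => if k = i then (0 : WithBot Λ) else ⊥)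
    have hi : Finset.univ.sup (fun j => A i j + x j) = 0 := by
      have := congrFun hx i; simpa [tropMap] using this
    have hne : (Finset.univ : Finset (Fin n)).Nonempty := by
      by_contra h
      rw [Finset.not_nonempty_iff_eq_empty] at h
      rw [h] at hi; simp at hi
    obtain ⟨j, -, hj⟩ := Finset.exists_mem_eq_sup Finset.univ hne (fun j => A i j + x j)
    rw [hi] at hj
    obtain ⟨c, hc⟩ : ∃ c : Λ, A i j = ↑c := by
      cases h : A i j with
      | bot => rw [h, WithBot.bot_add] at hj; simp at hj
      | coe c => exact ⟨c, rfl⟩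
    have hxj : x j ≠ ⊥ := by
      intro h; rw [h, WithBot.add_bot] at hj; simp at hj
    refine ⟨c, j, funext fun k => ?_⟩
    by_cases hk : k = i
    · subst hk; simp [hc]
    · rw [if_neg hk, WithBot.add_bot]
      have hk0 : A k j + x j = ⊥ := by
        have hx' := congrFun hx k
        simp only [tropMap, if_neg hk] at hx'
        exact le_bot_iff.mp (hx' ▸ Finset.le_sup (f := fun j => A k j + x j) (Finset.mem_univ j))
      rcases WithBot.add_eq_bot.mp hk0 with h | h
      · exact h
      · exact absurd h hxj
  · intro h y
    choose c jf hcol using h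
    have uniq : ∀ i i', jf i = jf i' → i = i' := by
      intro i i' hij
      by_contra hne
      have h1 := congrFun (hcol i) i
      have h2 := congrFun (hcol i') i
      rw [← hij] at h2
      rw [h1, if_pos rfl, if_neg hne, WithBot.add_bot, add_zero] at h2
      exact absurd h2 (by simp)
    refine ⟨fun j => Finset.univ.sup fun i0 => if jf i0 = j then y i0 + ↑(-c i0) else ⊥,
      funext fun i' => ?_⟩
    simp only [tropMap]
    apply le_antisymm
    · apply Finset.sup_le
      intro j _
      by_cases hj : ∃ i0, jf i0 = j
      · obtain ⟨i0, hi0⟩ := hj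
        have hx : (Finset.univ.sup fun i1 => if jf i1 = j then y i1 + ↑(-c i1) else ⊥)
            ≤ y i0 + ↑(-c i0) := by
          apply Finset.sup_le
          intro i1 _
          by_cases h1 : jf i1 = j
          · have : i1 = i0 := uniq i1 i0 (h1.trans hi0.symm)
            subst this; rw [if_pos h1]
          · rw [if_neg h1]; exact bot_le
        have hA : A i' j = (c i0 : WithBot Λ) + (if i' = i0 then 0 else ⊥) := by
          have := congrFun (hcol i0) i'
          rwa [hi0] at this
        calc A i' j + _ ≤ A i' j + (y i0 + ↑(-c i0)) := add_le_add_right hx _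
          _ ≤ y i' := by
            rw [hA]
            by_cases hii : i' = i0
            · subst hii
              rw [if_pos rfl, add_zero, coe_add_add_neg]
            · rw [if_neg hii, WithBot.add_bot, WithBot.bot_add]
              exact bot_le
      · have hx : (Finset.univ.sup fun i1 : Fin m => if jf i1 = j then y i1 + ↑(-c i1) else ⊥)
            = ⊥ := by
          apply le_bot_iff.mp
          apply Finset.sup_le
          intro i1 _
          rw [if_neg (fun hh => hj ⟨i1, hh⟩)]
        rw [hx, WithBot.add_bot]
        exact bot_le
    · have hA : A i' (jf i') = (c i' : WithBot Λ) := by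
        have := congrFun (hcol i') i'
        rw [this, if_pos rfl, add_zero]
      calc y i' = (c i' : WithBot Λ) + (y i' + ↑(-c i')) := (coe_add_add_neg _ _).symm
        _ ≤ A i' (jf i') + Finset.univ.sup fun i0 => if jf i0 = jf i' then y i0 + ↑(-c i0) else ⊥ := by
            rw [hA]
            apply add_le_add_right
            have := Finset.le_sup (f := fun i0 => if jf i0 = jf i' then y i0 + ↑(-c i0) else ⊥)
              (Finset.mem_univ i')
            simpa using this
        _ ≤ _ := Finset.le_sup (f := fun j => A i' j + Finset.univ.sup fun i0 => if jf i0 = j then y i0 + ↑(-c i0) else ⊥) (Finset.mem_univ (jf i'))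
end

section
/- With A, B = A⁻¹ ∈ GL_n(F) and α, β their tropicalizations, for every x ∈ Tⁿ one has x ≤ α(β(x)) and x ≤ β(α(x)) componentwise, and α^pi(x) ≤ β(x), where α^pi is the residuated (pseudo-inverse) map of α. -/
open scoped Classical

/-- The residuated (pseudo-inverse) map `f^pi(y)ʲ = min_i (yⁱ - Aⁱ_j)`, where the
minimum is taken over the indices `i` with `Aⁱ_j ≠ -∞` (every column of `A` is
assumed to contain such an entry). -/
noncomputable def tropPi {Λ : Type*} [AddCommGroup Λ] [LinearOrder Λ] [IsOrderedAddMonoid Λ] {m n : ℕ}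
    (A : Fin m → Fin n → WithBot Λ) (hcol : ∀ j, ∃ i, A i j ≠ ⊥)
    (y : Fin m → WithBot Λ) : Fin n → WithBot Λ :=
  fun j => Finset.inf' (Finset.univ.filter fun i => A i j ≠ ⊥)
    (by obtain ⟨i, hi⟩ := hcol j; exact ⟨i, by simp [hi]⟩)
    (fun i => (y i).map fun t => t - WithBot.unbotD 0 (A i j))

/-- With `A, B = A⁻¹ ∈ GL_n(F)` and `α, β` their entrywise tropicalizations:
for every `x ∈ Tⁿ`, `x ≤ α(β(x))`, `x ≤ β(α(x))`, and `α^pi(x) ≤ β(x)`,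
where `α^pi` is the residuated (pseudo-inverse) map of `α`. -/
theorem trop_inverse_inequalities {F : Type*} [Field F] {Λ : Type*}
    [AddCommGroup Λ] [LinearOrder Λ] [IsOrderedAddMonoid Λ] (τ : F → WithBot Λ)
    (hzero : ∀ z : F, τ z = ⊥ ↔ z = 0)
    (hmul : ∀ z w : F, τ (z * w) = τ z + τ w)
    (hadd : ∀ z w : F, τ (z + w) ≤ max (τ z) (τ w))
    (hsurj : Function.Surjective τ)
    {n : ℕ} (A B : Matrix (Fin n) (Fin n) F)
    (hAB : A * B = 1) (hBA : B * A = 1)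
    (hcol : ∀ j, ∃ i, τ (A i j) ≠ ⊥) :
    ∀ x : Fin n → WithBot Λ,
      x ≤ tropMap (fun i j => τ (A i j)) (tropMap (fun i j => τ (B i j)) x) ∧
      x ≤ tropMap (fun i j => τ (B i j)) (tropMap (fun i j => τ (A i j)) x) ∧
      tropPi (fun i j => τ (A i j)) hcol x ≤ tropMap (fun i j => τ (B i j)) x := by
  -- τ 1 = 0
  have h1 : τ (1 : F) = 0 := by
    have hne : τ (1 : F) ≠ ⊥ := by rw [Ne, hzero]; exact one_ne_zero
    have h := hmul 1 1
    rw [one_mul] at h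
    lift τ (1 : F) to Λ using hne with a ha
    have : a = a + a := by exact_mod_cast h
    have : a = 0 := by
      have h0 : a + 0 = a + a := by rw [add_zero]; exact this
      exact (add_left_cancel h0).symm
    exact_mod_cast congrArg (WithBot.some) this
  -- τ of a sum is at most the sup of the τ's
  have hsum : ∀ (s : Finset (Fin n)) (f : Fin n → F),
      τ (∑ i ∈ s, f i) ≤ s.sup fun i => τ (f i) := by
    intro s f
    induction s using Finset.induction_on with
    | empty => simp [(hzero 0).mpr rfl]
    | insert _ _ hnm ih =>
      rw [Finset.sum_insert hnm, Finset.sup_insert]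
      exact (hadd _ _).trans (max_le_max le_rfl ih)
  -- key: from M * N = 1, each diagonal gives an index with nonneg sum
  have key : ∀ (M N : Matrix (Fin n) (Fin n) F), M * N = 1 →
      ∀ i, ∃ j, 0 ≤ τ (M i j) + τ (N j i) := by
    intro M N hMN i
    have hd : (∑ j, M i j * N j i) = 1 := by
      have := congrFun (congrFun hMN i) i
      simpa [Matrix.mul_apply, Matrix.one_apply] using this
    have h0 : (0 : WithBot Λ) ≤ Finset.univ.sup fun j => τ (M i j) + τ (N j i) := by
      have := hsum Finset.univ (fun j => M i j * N j i)
      rw [hd, h1] at this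
      calc (0 : WithBot Λ) ≤ _ := this
        _ = _ := by simp_rw [hmul]
    have hbot : (⊥ : WithBot Λ) < 0 := by
      rw [← WithBot.coe_zero]; exact WithBot.bot_lt_coe 0
    obtain ⟨j, _, hj⟩ := (Finset.le_sup_iff hbot).mp h0
    exact ⟨j, hj⟩
  -- generic first inequality
  have step : ∀ (M N : Matrix (Fin n) (Fin n) F), M * N = 1 →
      ∀ x : Fin n → WithBot Λ,
      x ≤ tropMap (fun i j => τ (M i j)) (tropMap (fun i j => τ (N i j)) x) := by
    intro M N hMN x i
    obtain ⟨j, hj⟩ := key M N hMN i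
    calc x i = 0 + x i := (zero_add _).symm
      _ ≤ (τ (M i j) + τ (N j i)) + x i := add_le_add_left hj _
      _ = τ (M i j) + (τ (N j i) + x i) := add_assoc _ _ _
      _ ≤ τ (M i j) + tropMap (fun i j => τ (N i j)) x j :=
          add_le_add_right (Finset.le_sup (f := fun k => τ (N j k) + x k)
            (Finset.mem_univ i)) _
      _ ≤ _ := Finset.le_sup
          (f := fun j => τ (M i j) + tropMap (fun i j => τ (N i j)) x j)
          (Finset.mem_univ j)
  intro x
  refine ⟨step A B hAB x, step B A hBA x, ?_⟩
  intro j
  obtain ⟨i, hi⟩ := key B A hBA j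
  have hAne : τ (A i j) ≠ ⊥ := by
    intro h
    rw [h, WithBot.add_bot] at hi
    exact absurd hi (by simp [← WithBot.coe_zero])
  have hBne : τ (B j i) ≠ ⊥ := by
    intro h
    rw [h, WithBot.bot_add] at hi
    exact absurd hi (by simp [← WithBot.coe_zero]) 
  obtain ⟨a, ha⟩ := WithBot.ne_bot_iff_exists.mp hAne
  obtain ⟨b, hb⟩ := WithBot.ne_bot_iff_exists.mp hBne
  have hmem : i ∈ Finset.univ.filter fun i => τ (A i j) ≠ ⊥ := by
    simp [hAne]
  have hba : 0 ≤ b + a := by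
    rw [← hb, ← ha] at hi
    exact_mod_cast hi
  calc tropPi (fun i j => τ (A i j)) hcol x j
      ≤ (x i).map fun t => t - WithBot.unbotD 0 (τ (A i j)) := Finset.inf'_le _ hmem
    _ ≤ τ (B j i) + x i := by
        cases hx : x i with
        | bot => simp
        | coe t =>
          rw [← ha, ← hb]
          show ((t - a : Λ) : WithBot Λ) ≤ (b : WithBot Λ) + (t : WithBot Λ)
          rw [← WithBot.coe_add, WithBot.coe_le_coe, sub_le_iff_le_add]
          calc t = 0 + t := (zero_add t).symm
            _ ≤ (b + a) + t := add_le_add_left hba t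
            _ = b + t + a := by abel
    _ ≤ _ := Finset.le_sup (f := fun k => τ (B j k) + x k) (Finset.mem_univ i)
end

section
/- With A, B = A⁻¹ ∈ GL_n(F) and α, β their tropicalizations, for x ∈ Tⁿ: α(β(x)) = x if and only if β(x) = α^pi(x). Moreover the inversion domain D_{αβ} = {x : α(β(x)) = x} equals {x ∈ Tⁿ : xʰ - xᵏ ≥ (α ⊙ β)ʰ_k for all h, k}, and it is a tropical submodule of Tⁿ. -/
open scoped Classical

section Helpers

variable {Λ : Type*} [AddCommGroup Λ] [LinearOrder Λ] [IsOrderedAddMonoid Λ]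

lemma wb_add_max (c a b : WithBot Λ) : c + max a b = max (c + a) (c + b) := by
  rcases le_total a b with h | h
  · rw [max_eq_right h, max_eq_right (add_le_add_right h c)]
  · rw [max_eq_left h, max_eq_left (add_le_add_right h c)]

lemma wb_add_sup {ι : Type*} (s : Finset ι) (f : ι → WithBot Λ) (c : WithBot Λ) :
    c + s.sup f = s.sup fun i => c + f i := by
  induction s using Finset.cons_induction with
  | empty => simp
  | cons a s ha ih => rw [Finset.sup_cons, Finset.sup_cons, ← ih,
      wb_add_max]

lemma wb_sup_add {ι : Type*} (s : Finset ι) (f : ι → WithBot Λ) (c : WithBot Λ) :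
    s.sup f + c = s.sup fun i => f i + c := by
  rw [add_comm, wb_add_sup]; simp [add_comm]

lemma wb_resid (a : Λ) (y x : WithBot Λ) :
    (a : WithBot Λ) + y ≤ x ↔ y ≤ x.map fun t => t - a := by
  cases y with
  | bot => simp
  | coe t =>
    cases x with
    | bot => simp [← WithBot.coe_add]
    | coe s =>
      rw [← WithBot.coe_add, WithBot.map_coe, WithBot.coe_le_coe, WithBot.coe_le_coe,
        le_sub_iff_add_le, add_comm]

lemma tropMap_comp_apply {n : ℕ} (α β : Fin n → Fin n → WithBot Λ)
    (x : Fin n → WithBot Λ) (h : Fin n) :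
    tropMap α (tropMap β x) h =
      Finset.univ.sup fun k => (Finset.univ.sup fun i => α h i + β i k) + x k := by
  simp only [tropMap, wb_add_sup, wb_sup_add]
  rw [Finset.sup_comm]
  exact Finset.sup_congr rfl fun k _ => Finset.sup_congr rfl fun i _ => (add_assoc _ _ _).symm

/-- Galois connection between a tropical map and its residuated map. -/
lemma trop_galois {m n : ℕ} (α : Fin m → Fin n → WithBot Λ) (hcol : ∀ j, ∃ i, α i j ≠ ⊥)
    (y : Fin n → WithBot Λ) (x : Fin m → WithBot Λ) :
    tropMap α y ≤ x ↔ y ≤ tropPi α hcol x := by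
  constructor
  · intro H j
    rw [tropPi, Finset.le_inf'_iff]
    intro i hi
    rw [Finset.mem_filter] at hi
    lift α i j to Λ using hi.2 with a ha
    have hle := (Finset.sup_le_iff.mp (H i)) j (Finset.mem_univ j)
    rw [← ha] at hle
    simpa [WithBot.unbotD_coe] using (wb_resid a _ _).mp hle
  · intro H i
    rw [tropMap, Finset.sup_le_iff]
    intro j _
    by_cases hb : α i j = ⊥
    · simp [hb]
    · lift α i j to Λ using hb with a ha
      have hmem : i ∈ Finset.univ.filter fun i' => α i' j ≠ ⊥ := by
        rw [Finset.mem_filter]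
        exact ⟨Finset.mem_univ i, by rw [← ha]; exact WithBot.coe_ne_bot⟩
      have h2 := le_trans (H j) (Finset.inf'_le _ hmem)
      rw [← ha, WithBot.unbotD_coe] at h2
      exact (wb_resid a _ _).mpr h2

variable {F : Type*} [Field F] (τ : F → WithBot Λ)

lemma tau_one (hzero : ∀ z : F, τ z = ⊥ ↔ z = 0) (hmul : ∀ z w : F, τ (z * w) = τ z + τ w) :
    τ 1 = 0 := by
  have h1 : τ 1 ≠ ⊥ := fun h => one_ne_zero ((hzero 1).mp h)
  lift τ 1 to Λ using h1 with a ha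
  have h2 : a = a + a := by
    have := hmul 1 1
    rw [one_mul, ← ha, ← WithBot.coe_add, WithBot.coe_inj] at this
    exact this
  rw [left_eq_add.mp h2]
  exact WithBot.coe_zero

lemma tau_sum (hzero : ∀ z : F, τ z = ⊥ ↔ z = 0)
    (hadd : ∀ z w : F, τ (z + w) ≤ max (τ z) (τ w))
    {ι : Type*} (s : Finset ι) (f : ι → F) :
    τ (∑ i ∈ s, f i) ≤ s.sup fun i => τ (f i) := by
  induction s using Finset.cons_induction with
  | empty => simp [(hzero 0).mpr rfl]
  | cons a s ha ih =>
    rw [Finset.sum_cons, Finset.sup_cons]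
    exact le_trans (hadd _ _) (max_le_max le_rfl ih)

end Helpers

/-- With `A, B = A⁻¹ ∈ GL_n(F)` and `α, β` their entrywise tropicalizations:
`α(β(x)) = x ↔ β(x) = α^pi(x)`; the inversion domain
`D_{αβ} = {x : α(β(x)) = x}` equals `{x : ∀ h k, (α ⊙ β)ʰ_k ⊙ xᵏ ≤ xʰ}`
(the tropical form of `xʰ - xᵏ ≥ (α ⊙ β)ʰ_k`); and `D_{αβ}` is a tropical
submodule of `Tⁿ` (contains zero, closed under ⊕ and under scalar ⊙). -/
theorem inversion_domain {F : Type*} [Field F] {Λ : Type*}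
    [AddCommGroup Λ] [LinearOrder Λ] [IsOrderedAddMonoid Λ] (τ : F → WithBot Λ)
    (hzero : ∀ z : F, τ z = ⊥ ↔ z = 0)
    (hmul : ∀ z w : F, τ (z * w) = τ z + τ w)
    (hadd : ∀ z w : F, τ (z + w) ≤ max (τ z) (τ w))
    (hsurj : Function.Surjective τ)
    {n : ℕ} (A B : Matrix (Fin n) (Fin n) F)
    (hAB : A * B = 1) (hBA : B * A = 1)
    (hcol : ∀ j, ∃ i, τ (A i j) ≠ ⊥) :
    (∀ x : Fin n → WithBot Λ,
      tropMap (fun i j => τ (A i j)) (tropMap (fun i j => τ (B i j)) x) = x ↔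
        tropMap (fun i j => τ (B i j)) x = tropPi (fun i j => τ (A i j)) hcol x) ∧
    {x : Fin n → WithBot Λ |
        tropMap (fun i j => τ (A i j)) (tropMap (fun i j => τ (B i j)) x) = x} =
      {x : Fin n → WithBot Λ | ∀ h k : Fin n,
        (Finset.univ.sup fun i => τ (A h i) + τ (B i k)) + x k ≤ x h} ∧
    ((fun _ => ⊥ : Fin n → WithBot Λ) ∈
      {x : Fin n → WithBot Λ |
        tropMap (fun i j => τ (A i j)) (tropMap (fun i j => τ (B i j)) x) = x} ∧
     (∀ x y : Fin n → WithBot Λ,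
        tropMap (fun i j => τ (A i j)) (tropMap (fun i j => τ (B i j)) x) = x →
        tropMap (fun i j => τ (A i j)) (tropMap (fun i j => τ (B i j)) y) = y →
        tropMap (fun i j => τ (A i j))
          (tropMap (fun i j => τ (B i j)) (fun i => max (x i) (y i))) =
          fun i => max (x i) (y i)) ∧
     (∀ (c : Λ) (x : Fin n → WithBot Λ),
        tropMap (fun i j => τ (A i j)) (tropMap (fun i j => τ (B i j)) x) = x →
        tropMap (fun i j => τ (A i j))
          (tropMap (fun i j => τ (B i j)) (fun i => (c : WithBot Λ) + x i)) =
          fun i => (c : WithBot Λ) + x i)) := by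
  -- diagonal dominance from A * B = 1 and B * A = 1
  have hdiag : ∀ (M N : Matrix (Fin n) (Fin n) F), M * N = 1 →
      ∀ h : Fin n, (0 : WithBot Λ) ≤ Finset.univ.sup fun i => τ (M h i) + τ (N i h) := by
    intro M N hMN h
    have h1 : τ ((M * N) h h) = 0 := by rw [hMN, Matrix.one_apply_eq, tau_one τ hzero hmul]
    calc (0 : WithBot Λ) = τ ((M * N) h h) := h1.symm
      _ ≤ Finset.univ.sup fun i => τ (M h i * N i h) := by
          rw [Matrix.mul_apply]; exact tau_sum τ hzero hadd _ _
      _ = Finset.univ.sup fun i => τ (M h i) + τ (N i h) :=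
          Finset.sup_congr rfl fun i _ => hmul _ _
  have hdAB := hdiag A B hAB
  have hdBA := hdiag B A hBA
  -- α(β(x)) ≥ x always
  have hge : ∀ (x : Fin n → WithBot Λ) (h : Fin n),
      x h ≤ tropMap (fun i j => τ (A i j)) (tropMap (fun i j => τ (B i j)) x) h := by
    intro x h
    rw [tropMap_comp_apply]
    calc x h = 0 + x h := (zero_add _).symm
      _ ≤ (Finset.univ.sup fun i => τ (A h i) + τ (B i h)) + x h :=
          add_le_add_left (hdAB h) _
      _ ≤ _ := Finset.le_sup (f := fun k => (Finset.univ.sup fun i => τ (A h i) + τ (B i k)) + x k)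
          (Finset.mem_univ h)
  -- membership criterion for the inversion domain
  have hDiff : ∀ x : Fin n → WithBot Λ,
      tropMap (fun i j => τ (A i j)) (tropMap (fun i j => τ (B i j)) x) = x ↔
        ∀ h k : Fin n, (Finset.univ.sup fun i => τ (A h i) + τ (B i k)) + x k ≤ x h := by
    intro x
    constructor
    · intro H h k
      refine le_trans ?_ (congrFun H h).le
      rw [tropMap_comp_apply]
      exact Finset.le_sup (f := fun k => (Finset.univ.sup fun i => τ (A h i) + τ (B i k)) + x k)
        (Finset.mem_univ k)
    · intro H
      funext h
      refine le_antisymm ?_ (hge x h)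
      rw [tropMap_comp_apply]
      exact Finset.sup_le fun k _ => H h k
  -- α^pi(x) ≤ β(x) always
  have hpile : ∀ (x : Fin n → WithBot Λ) (j : Fin n),
      tropPi (fun i j => τ (A i j)) hcol x j ≤ tropMap (fun i j => τ (B i j)) x j := by
    intro x j
    obtain ⟨i, -, hi⟩ := (Finset.le_sup_iff (WithBot.bot_lt_coe (0 : Λ))).mp (hdBA j)
    have hbB : τ (B j i) ≠ ⊥ := by
      intro hb; rw [hb, WithBot.bot_add] at hi; exact absurd hi (by simp)
    have hbA : τ (A i j) ≠ ⊥ := by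
      intro hb; rw [hb, WithBot.add_bot] at hi; exact absurd hi (by simp)
    lift τ (B j i) to Λ using hbB with b hb
    lift τ (A i j) to Λ using hbA with a ha
    have hi' : (0 : Λ) ≤ b + a := by exact_mod_cast hi
    have hmem : i ∈ Finset.univ.filter fun i' => τ (A i' j) ≠ ⊥ := by
      rw [Finset.mem_filter]
      exact ⟨Finset.mem_univ i, by rw [← ha]; exact WithBot.coe_ne_bot⟩
    have step1 : tropPi (fun i j => τ (A i j)) hcol x j ≤
        (x i).map fun t => t - WithBot.unbotD 0 (τ (A i j)) := Finset.inf'_le _ hmem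
    have step2 : ((x i).map fun t => t - WithBot.unbotD 0 (τ (A i j))) ≤ τ (B j i) + x i := by
      rw [← ha, ← hb, WithBot.unbotD_coe]
      cases x i with
      | bot => simp
      | coe t =>
        rw [WithBot.map_coe, ← WithBot.coe_add, WithBot.coe_le_coe, sub_le_iff_le_add]
        calc t = 0 + t := (zero_add t).symm
          _ ≤ (b + a) + t := add_le_add_left hi' t
          _ = b + t + a := by abel
    refine le_trans (le_trans step1 step2) ?_
    exact Finset.le_sup (f := fun k => τ (B j k) + x k) (Finset.mem_univ i)
  refine ⟨?_, ?_, ?_, ?_, ?_⟩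
  · -- part 1
    intro x
    constructor
    · intro H
      refine le_antisymm ((trop_galois _ hcol _ _).mp H.le) (fun j => hpile x j)
    · intro H
      funext h
      exact le_antisymm (((trop_galois _ hcol _ _).mpr H.le) h) (hge x h)
  · -- part 2
    ext x
    exact hDiff x
  · -- zero
    exact (hDiff _).mpr (by intro h k; simp)
  · -- closed under max
    intro x y Hx Hy
    refine (hDiff _).mpr fun h k => ?_
    rw [wb_add_max]
    exact max_le_max ((hDiff x).mp Hx h k) ((hDiff y).mp Hy h k)
  · -- closed under scalar
    intro c x Hx
    refine (hDiff _).mpr fun h k => ?_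
    rw [add_left_comm]
    exact add_le_add_right ((hDiff x).mp Hx h k) _
end
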